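/- For every s ∈ [0,1], the vector |E₀;s⟩ = [√N·(E₁(s) − s)·|s⟩ + s·|m⟩] / √(E₁(s)² + (N−1)·(E₁(s) − s)²) is a unit vector and is an eigenvector of H(s) with eigenvalue E₀(s), i.e. H(s)|E₀;s⟩ = E₀(s)·|E₀;s⟩ and ‖|E₀;s⟩‖ = 1. -/

import Mathlib

/-! On vectors `α|s⟩ + β|m⟩` of the plane spanned by the two unit vectors `|s⟩`, `|m⟩`, whose
overlap is the real number `1/√N`, the Hamiltonian `H(s)` acts by a 2×2 matrix, so the eigenvalue
equation `H(s) w = (1 - E) w` reduces to two scalar equations. For `α = √N(E₁ - s)`, `β = s` they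
say exactly that `E₁` is a root of `λ² - λ + ((N-1)/N) s (1-s)`, and `1 - E₁ = E₀`. The same Gram
data give `‖α|s⟩ + β|m⟩‖² = E₁² + (N-1)(E₁ - s)²`, which is positive since `E₁ ≥ 1/2`. -/

/-- The rank-one projector `|ψ⟩⟨ψ|`, mapping `v` to `⟪ψ, v⟫ • ψ`. -/
noncomputable def proj {H : Type*} [NormedAddCommGroup H] [InnerProductSpace ℂ H]
    (ψ : H) : H →L[ℂ] H := (innerSL ℂ ψ).smulRight ψ

/-- The uniform superposition `|s⟩ = (1/√N) ∑_x |x⟩`. -/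
noncomputable def uniformState (N : ℕ) : EuclideanSpace ℂ (Fin N) :=
  ((1 / Real.sqrt N : ℝ) : ℂ) • ∑ x : Fin N, EuclideanSpace.single x (1 : ℂ)

/-- Ground-state energy of the interpolating search Hamiltonian. -/
noncomputable def E₀ (N : ℕ) (s : ℝ) : ℝ :=
  (1 - Real.sqrt (1 - 4 * ((N - 1 : ℝ) / N) * s * (1 - s))) / 2

/-- Excited-state energy of the interpolating search Hamiltonian. -/
noncomputable def E₁ (N : ℕ) (s : ℝ) : ℝ :=
  (1 + Real.sqrt (1 - 4 * ((N - 1 : ℝ) / N) * s * (1 - s))) / 2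

section TwoProjectors

variable {H : Type*} [NormedAddCommGroup H] [InnerProductSpace ℂ H]

@[simp]
theorem proj_apply (ψ v : H) : proj ψ v = inner ℂ ψ v • ψ := rfl

variable {u e : H} {c : ℝ}

theorem smul_one_sub_proj_add_smul_one_sub_proj_apply (hu : ‖u‖ = 1) (he : ‖e‖ = 1)
    (hue : inner ℂ u e = c) {a b α β E : ℂ}
    (hα : E * α = a * (α + β * c)) (hβ : E * β = b * (α * c + β)) :
    (a • (1 - proj u) + b • (1 - proj e)) (α • u + β • e) = (a + b - E) • (α • u + β • e) := by
  have heu : inner ℂ e u = c := by rw [← inner_conj_symm, hue, Complex.conj_ofReal]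
  simp only [add_apply, smul_apply, sub_apply, one_apply_eq_self, proj_apply,
    inner_add_right, inner_smul_right, inner_self_eq_one_of_norm_eq_one hu,
    inner_self_eq_one_of_norm_eq_one he, hue, heu]
  match_scalars
  · linear_combination hα
  · linear_combination hβ

theorem norm_ofReal_smul_add_ofReal_smul_sq (hu : ‖u‖ = 1) (he : ‖e‖ = 1)
    (hue : inner ℂ u e = c) (α β : ℝ) :
    ‖(α : ℂ) • u + (β : ℂ) • e‖ ^ 2 = α ^ 2 + β ^ 2 + 2 * α * β * c := by
  rw [@norm_add_sq ℂ, inner_smul_left, inner_smul_right, hue, norm_smul, norm_smul, hu, he]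
  simp only [Complex.conj_ofReal, ← Complex.ofReal_mul, RCLike.re_to_complex, Complex.ofReal_re,
    Complex.norm_real, Real.norm_eq_abs, mul_one, sq_abs]
  ring

end TwoProjectors

theorem uniformState_apply (N : ℕ) (x : Fin N) :
    uniformState N x = ((1 / Real.sqrt N : ℝ) : ℂ) := by
  simp [uniformState]

theorem norm_uniformState {N : ℕ} (hN : N ≠ 0) : ‖uniformState N‖ = 1 := by
  rw [EuclideanSpace.norm_eq]
  simp [uniformState_apply, mul_inv_cancel₀ (by positivity : Real.sqrt N ≠ 0)]

theorem inner_uniformState_single (N : ℕ) (m : Fin N) :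
    inner ℂ (uniformState N) (EuclideanSpace.single m 1) = ((1 / Real.sqrt N : ℝ) : ℂ) := by
  simp [EuclideanSpace.inner_single_right, uniformState_apply]

theorem E₁_discriminant_nonneg (N : ℕ) (s : ℝ) :
    0 ≤ 1 - 4 * ((N - 1 : ℝ) / N) * s * (1 - s) := by
  have hk : (N - 1 : ℝ) / N ≤ 1 := div_le_one_of_le₀ (by linarith) (Nat.cast_nonneg N)
  have hk' : 0 ≤ (N - 1 : ℝ) / N := by
    rcases N.eq_zero_or_pos with rfl | hN
    · simp
    · exact div_nonneg (sub_nonneg.mpr (Nat.one_le_cast.mpr hN)) (Nat.cast_nonneg N)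
  -- `1 - 4k s(1-s) = (1 - k) + k(2s - 1)²`
  nlinarith [mul_nonneg hk' (sq_nonneg (2 * s - 1))]

theorem E₀_eq_one_sub_E₁ (N : ℕ) (s : ℝ) : E₀ N s = 1 - E₁ N s := by
  unfold E₀ E₁; ring

theorem one_half_le_E₁ (N : ℕ) (s : ℝ) : 1 / 2 ≤ E₁ N s := by
  unfold E₁; linarith [Real.sqrt_nonneg (1 - 4 * ((N - 1 : ℝ) / N) * s * (1 - s))]

theorem E₁_sq {N : ℕ} (hN : N ≠ 0) (s : ℝ) :
    N * E₁ N s ^ 2 = N * E₁ N s - (N - 1) * s * (1 - s) := by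
  have hr := Real.sq_sqrt (E₁_discriminant_nonneg N s)
  unfold E₁
  generalize Real.sqrt _ = r at hr ⊢
  field_simp at hr ⊢
  linear_combination hr

theorem E₁_sq_add_mul_sub_sq_pos {N : ℕ} (hN : N ≠ 0) (s : ℝ) :
    0 < E₁ N s ^ 2 + (N - 1 : ℝ) * (E₁ N s - s) ^ 2 := by
  have hN1 : (1 : ℝ) ≤ N := Nat.one_le_cast.mpr (Nat.one_le_iff_ne_zero.mpr hN)
  nlinarith [one_half_le_E₁ N s, mul_nonneg (sub_nonneg.mpr hN1) (sq_nonneg (E₁ N s - s))]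

noncomputable def searchHamiltonian (N : ℕ) (m : Fin N) (s : ℝ) :
    EuclideanSpace ℂ (Fin N) →L[ℂ] EuclideanSpace ℂ (Fin N) :=
  ((1 - s : ℝ) : ℂ) • (1 - proj (uniformState N)) +
    ((s : ℝ) : ℂ) • (1 - proj (EuclideanSpace.single m 1))

noncomputable def unnormalizedGroundState (N : ℕ) (m : Fin N) (s : ℝ) :
    EuclideanSpace ℂ (Fin N) :=
  ((Real.sqrt N * (E₁ N s - s) : ℝ) : ℂ) • uniformState N +
    ((s : ℝ) : ℂ) • EuclideanSpace.single m (1 : ℂ)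

theorem searchHamiltonian_apply_unnormalizedGroundState {N : ℕ} (hN : N ≠ 0) (m : Fin N)
    (s : ℝ) :
    searchHamiltonian N m s (unnormalizedGroundState N m s) =
      ((E₀ N s : ℝ) : ℂ) • unnormalizedGroundState N m s := by
  have hsqrtN : Real.sqrt N ^ 2 = N := Real.sq_sqrt (Nat.cast_nonneg N)
  set E := E₁ N s
  have hα : E * (Real.sqrt N * (E - s)) =
      (1 - s) * (Real.sqrt N * (E - s) + s * (1 / Real.sqrt N)) := by
    field_simp
    linear_combination E₁_sq hN s + (E ^ 2 - E + s - s ^ 2) * hsqrtN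
  have hβ : E * s = s * (Real.sqrt N * (E - s) * (1 / Real.sqrt N) + s) := by
    field_simp
    ring
  rw [searchHamiltonian, unnormalizedGroundState, smul_one_sub_proj_add_smul_one_sub_proj_apply
    (norm_uniformState hN) (by simp) (inner_uniformState_single N m) (E := E)
    (by exact_mod_cast hα) (by exact_mod_cast hβ), E₀_eq_one_sub_E₁]
  congr 1
  push_cast
  ring

theorem norm_unnormalizedGroundState {N : ℕ} (hN : N ≠ 0) (m : Fin N) (s : ℝ) :
    ‖unnormalizedGroundState N m s‖ =
      Real.sqrt (E₁ N s ^ 2 + (N - 1 : ℝ) * (E₁ N s - s) ^ 2) := by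
  have hsqrtN : Real.sqrt N ^ 2 = N := Real.sq_sqrt (Nat.cast_nonneg N)
  rw [← Real.sqrt_sq (norm_nonneg _), unnormalizedGroundState,
    norm_ofReal_smul_add_ofReal_smul_sq (norm_uniformState hN) (by simp)
      (inner_uniformState_single N m)]
  congr 1
  field_simp
  linear_combination (E₁ N s - s) ^ 2 * hsqrtN

theorem groundState_interpolatingHamiltonian_general (N : ℕ) (hN : 2 ≤ N) (m : Fin N)
    (s : ℝ)
    (Hs : EuclideanSpace ℂ (Fin N) →L[ℂ] EuclideanSpace ℂ (Fin N))
    (hHs : Hs = ((1 - s : ℝ) : ℂ) • (1 - proj (uniformState N)) +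
      ((s : ℝ) : ℂ) • (1 - proj (EuclideanSpace.single m 1)))
    (v : EuclideanSpace ℂ (Fin N))
    (hv : v = ((1 / Real.sqrt ((E₁ N s)^2 + (N - 1 : ℝ) * (E₁ N s - s)^2) : ℝ) : ℂ) •
      (((Real.sqrt N * (E₁ N s - s) : ℝ) : ℂ) • uniformState N +
        ((s : ℝ) : ℂ) • EuclideanSpace.single m (1 : ℂ))) :
    Hs v = ((E₀ N s : ℝ) : ℂ) • v ∧ ‖v‖ = 1 := by
  have hN0 : N ≠ 0 := by omega
  have hHs' : Hs = searchHamiltonian N m s := hHs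
  have hv' : v =
      ((1 / ‖unnormalizedGroundState N m s‖ : ℝ) : ℂ) • unnormalizedGroundState N m s := by
    rw [norm_unnormalizedGroundState hN0 m s]; exact hv
  have hw : ‖unnormalizedGroundState N m s‖ ≠ 0 := by
    rw [norm_unnormalizedGroundState hN0 m s]
    exact (Real.sqrt_pos.mpr (E₁_sq_add_mul_sub_sq_pos hN0 s)).ne'
  refine ⟨?_, ?_⟩
  · rw [hHs', hv', map_smul, searchHamiltonian_apply_unnormalizedGroundState hN0 m s, smul_comm]
  · rw [hv', norm_smul, Complex.norm_real, Real.norm_of_nonneg (by positivity),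
      one_div_mul_cancel hw]

/-- For the interpolating Hamiltonian `H(s) = (1−s)(I−|s⟩⟨s|) + s(I−|m⟩⟨m|)` of
the adiabatic quantum search, for every `s ∈ [0,1]` the vector
`|E₀;s⟩ = [√N(E₁(s)−s)|s⟩ + s|m⟩] / √(E₁(s)² + (N−1)(E₁(s)−s)²)` is a unit
eigenvector of `H(s)` with eigenvalue `E₀(s)`. -/
theorem groundState_interpolatingHamiltonian (N : ℕ) (hN : 2 ≤ N) (m : Fin N)
    (s : ℝ) (hs : s ∈ Set.Icc (0:ℝ) 1)
    (Hs : EuclideanSpace ℂ (Fin N) →L[ℂ] EuclideanSpace ℂ (Fin N))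
    (hHs : Hs = ((1 - s : ℝ) : ℂ) • (1 - proj (uniformState N)) +
      ((s : ℝ) : ℂ) • (1 - proj (EuclideanSpace.single m 1)))
    (v : EuclideanSpace ℂ (Fin N))
    (hv : v = ((1 / Real.sqrt ((E₁ N s)^2 + (N - 1 : ℝ) * (E₁ N s - s)^2) : ℝ) : ℂ) •
      (((Real.sqrt N * (E₁ N s - s) : ℝ) : ℂ) • uniformState N +
        ((s : ℝ) : ℂ) • EuclideanSpace.single m (1 : ℂ))) :
    Hs v = ((E₀ N s : ℝ) : ℂ) • v ∧ ‖v‖ = 1 :=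
  groundState_interpolatingHamiltonian_general N hN m s Hs hHs v hv
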